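/- Let T = [a1, …, an] be a list of integers with all ai ≥ 2, let d be the tridiagonal discriminant, and for 1 ≤ j ≤ n set u_j = (d([a1, …, a(j−1)]) + d([a(j+1), …, an])) / d(T) (a rational number; the numerator uses d([]) = 1). Then (u_1, …, u_n) satisfies the adjunction system: a_j·u_j − u_{j−1} − u_{j+1} = 2 − deg(j) for all j, where u_0 = u_{n+1} = 0 and deg(j) is the number of neighbours of j in the path graph (deg = 1 for j = 1 and j = n when n ≥ 2, deg = 0 when n = 1, deg = 2 otherwise). Moreover this is the unique rational solution of this system. -/

import Mathlib

/-- The tridiagonal matrix with diagonal entries given by the list `T`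
and entries `-1` on the sub- and super-diagonal. -/
def tridiagMatrix (T : List ℤ) : Matrix (Fin T.length) (Fin T.length) ℤ :=
  Matrix.of fun i j =>
    if i = j then T.get i
    else if (i : ℕ) + 1 = (j : ℕ) ∨ (j : ℕ) + 1 = (i : ℕ) then -1 else 0

/-- The discriminant of a chain `T`: the determinant of the associated tridiagonal
matrix (so the discriminant of the empty list is `1`). -/
def chainDisc (T : List ℤ) : ℤ := (tridiagMatrix T).det

/-- The log discrepancy of the `j`-th entry (1-indexed) of the chain `T`:
`ld_j(T) = (d(T_{<j}) + d(T_{>j})) / d(T)`, where `T_{<j}` is the prefix before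
position `j` and `T_{>j}` the suffix after position `j`. -/
def chainLd (T : List ℤ) (j : ℕ) : ℚ :=
  ((chainDisc (T.take (j - 1)) : ℚ) + (chainDisc (T.drop j) : ℚ)) / (chainDisc T : ℚ)

/-- `u : ℕ → ℚ` (with `u j` the value at the `j`-th vertex, 1-indexed) satisfies the
adjunction system of the chain `T`:  `a_j·u_j − u_{j−1} − u_{j+1} = 2 − deg(j)` for
`1 ≤ j ≤ n`, with the conventions `u_0 = u_{n+1} = 0`, where `deg(j)` is the number of
neighbours of `j` in the path graph on `n` vertices. -/
def IsAdjunctionSolution (T : List ℤ) (u : ℕ → ℚ) : Prop :=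
  u 0 = 0 ∧ u (T.length + 1) = 0 ∧
    ∀ j, 1 ≤ j → j ≤ T.length →
      (T.getD (j - 1) 0 : ℚ) * u j - u (j - 1) - u (j + 1) =
        2 - ((if j = 1 then 0 else 1) + (if j = T.length then 0 else 1))

/-!
Write `N_j = d(T_{<j}) + d(T_{>j})`. Expanding the tridiagonal determinant along its first or
last row shows that both the prefix and the suffix continuants satisfy the three-term recurrence
`a_j x_j = x_{j-1} + x_{j+1}` on `1 ≤ j ≤ n`, hence so does `N`. Its boundary values
`N_0 = N_{n+1} = d(T)` are exactly what turns `N / d(T)`, cut off to `0` at `0` and `n + 1`,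
into a solution of the system with right-hand side `2 - deg j`.

For uniqueness, the difference `w` of two solutions satisfies the recurrence with `w_0 = 0`,
so `w_j = w_1 · d(T_{<j})`; then `0 = w_{n+1} = w_1 · d(T)`, and `d(T) > 0` when all `a_i ≥ 2`.
-/

section

variable {R : Type*} [CommRing R]

def jacobiMatrix (n : ℕ) (f : ℕ → R) : Matrix (Fin n) (Fin n) R :=
  Matrix.of fun i j =>
    if (i : ℕ) = j then f i else if (i : ℕ) + 1 = j ∨ (j : ℕ) + 1 = i then -1 else 0

theorem jacobiMatrix_submatrix_succ (n : ℕ) (f : ℕ → R) :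
    (jacobiMatrix (n + 1) f).submatrix Fin.succ Fin.succ = jacobiMatrix n (fun k => f (k + 1)) := by
  ext i j
  simp [jacobiMatrix]

theorem det_jacobiMatrix_succ_succ (n : ℕ) (f : ℕ → R) :
    (jacobiMatrix (n + 2) f).det =
      f 0 * (jacobiMatrix (n + 1) (fun k => f (k + 1))).det -
        (jacobiMatrix n (fun k => f (k + 2))).det := by
  set M := jacobiMatrix (n + 2) f
  have minor : (M.submatrix Fin.succ (Fin.succAbove 1)).det =
      -(jacobiMatrix n (fun k => f (k + 2))).det := by
    have hsub : (M.submatrix Fin.succ (Fin.succAbove 1)).submatrix Fin.succ Fin.succ =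
        jacobiMatrix n (fun k => f (k + 2)) := by
      ext i j
      simp [M, jacobiMatrix]
    rw [Matrix.det_succ_column_zero, Fin.sum_univ_succ, Fin.succAbove_zero, hsub]
    simp [M, jacobiMatrix]
  have h00 : M 0 0 = f 0 := by simp [M, jacobiMatrix]
  have h01 : M 0 1 = -1 := by simp [M, jacobiMatrix]
  have h0 : ∀ i : Fin n, M 0 i.succ.succ = 0 := by simp [M, jacobiMatrix]
  rw [Matrix.det_succ_row_zero, Fin.sum_univ_succ, Fin.sum_univ_succ, Fin.succ_zero_eq_one, minor]
  simp [h00, h01, h0, M, jacobiMatrix_submatrix_succ]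
  ring

theorem tridiagMatrix_eq_jacobiMatrix (T : List ℤ) :
    tridiagMatrix T = jacobiMatrix T.length (fun k => T.getD k 0) := by
  ext i j
  simp [tridiagMatrix, jacobiMatrix, Fin.ext_iff]

theorem chainDisc_nil : chainDisc [] = 1 := by
  simp [chainDisc]

theorem chainDisc_singleton (a : ℤ) : chainDisc [a] = a := by
  simp [chainDisc, tridiagMatrix]

theorem chainDisc_cons_cons (a b : ℤ) (L : List ℤ) :
    chainDisc (a :: b :: L) = a * chainDisc (b :: L) - chainDisc L := by
  simp only [chainDisc, tridiagMatrix_eq_jacobiMatrix, List.length_cons]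
  rw [det_jacobiMatrix_succ_succ]
  simp

theorem chainDisc_reverse (T : List ℤ) : chainDisc T.reverse = chainDisc T := by
  rw [chainDisc, chainDisc,
    ← Matrix.det_reindex_self (Fin.revPerm.trans (finCongr T.length_reverse.symm))]
  congr 1
  ext i j
  have := i.2
  have := j.2
  simp only [List.length_reverse] at *
  simp [tridiagMatrix, List.getElem_reverse, Fin.ext_iff]
  split_ifs <;> first | omega | rfl | (congr 1; omega)

theorem chainDisc_append_pair (L : List ℤ) (b a : ℤ) :
    chainDisc (L ++ [b, a]) = a * chainDisc (L ++ [b]) - chainDisc L := by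
  rw [← chainDisc_reverse, ← chainDisc_reverse (L ++ [b]), ← chainDisc_reverse L]
  simpa using chainDisc_cons_cons a b L.reverse

theorem chainDisc_tail_nonneg_and_lt :
    ∀ T : List ℤ, T ≠ [] → (∀ a ∈ T, 2 ≤ a) →
      0 ≤ chainDisc T.tail ∧ chainDisc T.tail < chainDisc T
  | [a], _, h => by
    have := h a (by simp)
    simp only [List.tail_cons, chainDisc_nil, chainDisc_singleton]
    omega
  | a :: b :: L, _, h => by
    have ha := h a (by simp)
    obtain ⟨hL, hbL⟩ :=
      chainDisc_tail_nonneg_and_lt (b :: L) (by simp) fun x hx => h x (by simp [hx])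
    simp only [List.tail_cons, chainDisc_cons_cons] at hL hbL ⊢
    constructor <;> nlinarith

theorem chainDisc_pos {T : List ℤ} (h : ∀ a ∈ T, 2 ≤ a) : 0 < chainDisc T := by
  rcases eq_or_ne T [] with rfl | hT
  · simp [chainDisc_nil]
  · obtain ⟨h₀, h₁⟩ := chainDisc_tail_nonneg_and_lt T hT h
    omega

def IsChainHarmonic (T : List ℤ) (x : ℕ → R) : Prop :=
  ∀ j, 1 ≤ j → j ≤ T.length → (T.getD (j - 1) 0 : R) * x j - x (j - 1) - x (j + 1) = 0

namespace IsChainHarmonic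

variable {T : List ℤ} {x y : ℕ → R}

theorem add (hx : IsChainHarmonic T x) (hy : IsChainHarmonic T y) : IsChainHarmonic T (x + y) :=
  fun j h₁ h₂ => by simp only [Pi.add_apply]; linear_combination hx j h₁ h₂ + hy j h₁ h₂

theorem intCast {x : ℕ → ℤ} (hx : IsChainHarmonic T x) :
    IsChainHarmonic T (fun j => (x j : R)) :=
  fun j h₁ h₂ => by simpa using congrArg (Int.cast : ℤ → R) (hx j h₁ h₂)

end IsChainHarmonic

/-- The prefix and suffix continuants `d(T_{<j})` and `d(T_{>j})`, extended by `0` at `j = 0`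
resp. `j = n + 1`: these are the values that keep the three-term recurrence valid at the ends. -/
def prefixDisc (T : List ℤ) (j : ℕ) : ℤ := if j = 0 then 0 else chainDisc (T.take (j - 1))

def suffixDisc (T : List ℤ) (j : ℕ) : ℤ := if j ≤ T.length then chainDisc (T.drop j) else 0

theorem chainDisc_take_add_two {T : List ℤ} {k : ℕ} (hk : k + 1 < T.length) :
    chainDisc (T.take (k + 2)) = T[k + 1] * chainDisc (T.take (k + 1)) - chainDisc (T.take k) := by
  rw [List.take_succ_eq_append_getElem hk, List.take_succ_eq_append_getElem (by omega),
    List.append_assoc, List.singleton_append, chainDisc_append_pair]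

theorem chainDisc_drop {T : List ℤ} {k : ℕ} (hk : k + 1 < T.length) :
    chainDisc (T.drop k) = T[k] * chainDisc (T.drop (k + 1)) - chainDisc (T.drop (k + 2)) := by
  rw [List.drop_eq_getElem_cons (by omega), List.drop_eq_getElem_cons hk, chainDisc_cons_cons]

theorem isChainHarmonic_prefixDisc (T : List ℤ) : IsChainHarmonic T (prefixDisc T) := by
  rintro (_ | _ | k) h₁ h₂
  · omega
  · simp [prefixDisc, List.take_one, List.head?_eq_getElem?, List.getElem?_eq_getElem h₂,
      chainDisc_nil, chainDisc_singleton]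
  · have hk : k + 1 < T.length := by omega
    simp only [prefixDisc, Nat.add_sub_cancel, List.getD_eq_getElem _ _ hk, Int.cast_id]
    simp [chainDisc_take_add_two hk]

theorem isChainHarmonic_suffixDisc (T : List ℤ) : IsChainHarmonic T (suffixDisc T) := by
  rintro (_ | k) h₁ h₂
  · omega
  have hk : k < T.length := by omega
  simp only [suffixDisc, Nat.add_sub_cancel, if_pos hk.le, if_pos h₂, List.getD_eq_getElem _ _ hk,
    Int.cast_id]
  rcases Nat.lt_or_ge (k + 1) T.length with hk' | hk'
  · simp [chainDisc_drop hk', hk']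
  · rw [if_neg (by omega), List.drop_eq_getElem_cons hk, List.drop_of_length_le hk',
      chainDisc_singleton, chainDisc_nil]
    ring

theorem IsChainHarmonic.eq_mul_prefixDisc {T : List ℤ} {w : ℕ → R} (hw : IsChainHarmonic T w)
    (h₀ : w 0 = 0) : ∀ j ≤ T.length + 1, w j = w 1 * prefixDisc T j
  | 0, _ => by simp [h₀, prefixDisc]
  | 1, _ => by simp [prefixDisc, chainDisc_nil]
  | k + 2, hk => by
    have step := hw (k + 1) (by omega) (by omega)
    have hP := (isChainHarmonic_prefixDisc T).intCast (R := R) (k + 1) (by omega) (by omega)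
    simp only [Nat.add_sub_cancel] at step hP
    rw [hw.eq_mul_prefixDisc h₀ k (by omega),
      hw.eq_mul_prefixDisc h₀ (k + 1) (by omega)] at step
    linear_combination -step + w 1 * hP

theorem IsAdjunctionSolution.isChainHarmonic_sub {T : List ℤ} {u v : ℕ → ℚ}
    (hu : IsAdjunctionSolution T u) (hv : IsAdjunctionSolution T v) :
    IsChainHarmonic T (u - v) :=
  fun j h₁ h₂ => by
    simp only [Pi.sub_apply]
    linear_combination hu.2.2 j h₁ h₂ - hv.2.2 j h₁ h₂

theorem IsAdjunctionSolution.unique {T : List ℤ} {u v : ℕ → ℚ}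
    (hu : IsAdjunctionSolution T u) (hv : IsAdjunctionSolution T v) (hd : chainDisc T ≠ 0) :
    ∀ j ≤ T.length + 1, u j = v j := by
  have hw := hu.isChainHarmonic_sub hv
  have hw₀ : (u - v) 0 = 0 := by simp [hu.1, hv.1]
  have hw₁ : (u - v) 1 = 0 := by
    have := hw.eq_mul_prefixDisc hw₀ (T.length + 1) le_rfl
    simpa [hu.2.1, hv.2.1, prefixDisc, hd] using this
  intro j hj
  simpa [hw₁, sub_eq_zero] using hw.eq_mul_prefixDisc hw₀ j hj

theorem IsChainHarmonic.isAdjunctionSolution {T : List ℤ} {N : ℕ → ℚ}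
    (hN : IsChainHarmonic T N) {D : ℚ} (hD : D ≠ 0) (h₀ : N 0 = D)
    (hn : N (T.length + 1) = D) :
    IsAdjunctionSolution T (fun j => if 1 ≤ j ∧ j ≤ T.length then N j / D else 0) := by
  refine ⟨by simp, by simp, fun j h₁ h₂ => ?_⟩
  have hprev : (if 1 ≤ j - 1 ∧ j - 1 ≤ T.length then N (j - 1) / D else 0) =
      N (j - 1) / D - if j = 1 then 1 else 0 := by
    rcases eq_or_ne j 1 with rfl | hj
    · simp [h₀, hD]
    · simp [hj, show 1 ≤ j - 1 by omega, show j - 1 ≤ T.length by omega]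
  have hnext : (if 1 ≤ j + 1 ∧ j + 1 ≤ T.length then N (j + 1) / D else 0) =
      N (j + 1) / D - if j = T.length then 1 else 0 := by
    rcases eq_or_ne j T.length with rfl | hj
    · simp [hn, hD]
    · simp [hj, show j + 1 ≤ T.length by omega]
  simp only [if_pos (And.intro h₁ h₂), hprev, hnext]
  field_simp
  split_ifs <;> linear_combination hN j h₁ h₂

end

/-- **Log discrepancies of an admissible chain solve the adjunction system, uniquely.**
For a list `T` of integers `≥ 2`, the log discrepancies `ld_j(T)` (extended by `0`
outside `1 ≤ j ≤ n`) satisfy the adjunction system, and any rational solution of the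
system agrees with them at every `1 ≤ j ≤ n`. -/
theorem chain_log_discrepancies_adjunction (T : List ℤ) (h : ∀ a ∈ T, 2 ≤ a) :
    IsAdjunctionSolution T (fun j => if 1 ≤ j ∧ j ≤ T.length then chainLd T j else 0) ∧
      ∀ u : ℕ → ℚ, IsAdjunctionSolution T u →
        ∀ j, 1 ≤ j → j ≤ T.length → u j = chainLd T j := by
  have hd : chainDisc T ≠ 0 := (chainDisc_pos h).ne'
  have hN := ((isChainHarmonic_prefixDisc T).intCast (R := ℚ)).add
    (isChainHarmonic_suffixDisc T).intCast
  have hsol : IsAdjunctionSolution T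
      (fun j => if 1 ≤ j ∧ j ≤ T.length then chainLd T j else 0) := by
    convert hN.isAdjunctionSolution (D := chainDisc T) (by exact_mod_cast hd)
      (by simp [prefixDisc, suffixDisc]) (by simp [prefixDisc, suffixDisc]) using 3 with j hj
    simp [chainLd, prefixDisc, suffixDisc, hj.2, show j ≠ 0 by omega]
  refine ⟨hsol, fun u hu j h₁ h₂ => ?_⟩
  simpa [h₁, h₂] using hu.unique hsol hd j (by omega)
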